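/- Let u ≥ 2 be a power of 2, let b ≥ 1 be an integer, and let X be a finite set of integers contained in (0, u]. Then there exists a collection 𝒮 of subsets of X, each of cardinality at most b, with |𝒮| ≤ 2·(b+1)²·u·(log₂ u + 1), such that for every subset S ⊆ X there exists a subset Ŝ ⊆ X with |Ŝ| = |S|, SUM(Ŝ) = SUM(S), and Ŝ is the union of at most 2·(|S|/b + 1)·(log₂ u + 1) pairwise disjoint members of 𝒮. -/

import Mathlib

/-- `SUM S` is the sum of the elements of the finite set `S`. -/
def SUM (S : Finset ℕ) : ℕ := S.sum id

/-!
Cover `(0, 2^L]` by the dyadic intervals `(j 2^t, (j+1) 2^t]` of all levels `t ≤ L`. For each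
dyadic interval `I`, each size `1 ≤ m ≤ b` and each of the at most `b 2^t` possible sums `σ`, store
one subset of `X ∩ I` of size `m` and sum `σ`, if there is one; this gives `b² 2^L` sets per level.
Given `S ⊆ X`, descend the dyadic tree and stop at the intervals `I` with `|S ∩ I| ≤ b`, replacing
`S ∩ I` by the stored set with the same size and sum. Only intervals containing more than `b` points
of `S` are split, so every level of the descent adds at most `|S| / (b + 1)` sets.
-/

open Finset

lemma sum_mem_Ioc_of_subset_Ioc {S : Finset ℕ} {a c : ℕ} (hS : S ⊆ Ioc a c)
    (hne : S.Nonempty) : SUM S ∈ Ioc (#S * a) (#S * c) := by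
  have hlt : ∑ _x ∈ S, a < ∑ x ∈ S, x :=
    sum_lt_sum_of_nonempty hne fun x hx => (mem_Ioc.mp (hS hx)).1
  have hle : ∑ x ∈ S, x ≤ ∑ _x ∈ S, c := sum_le_sum fun x hx => (mem_Ioc.mp (hS hx)).2
  simp only [sum_const, smul_eq_mul] at hlt hle
  exact mem_Ioc.mpr ⟨hlt, hle⟩

section CardSumRep

open Classical in
noncomputable def cardSumRep (Y : Finset ℕ) (m σ : ℕ) : Finset ℕ :=
  if h : ∃ T ⊆ Y, #T = m ∧ SUM T = σ then h.choose else ∅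

variable {Y : Finset ℕ} {m σ : ℕ}

lemma cardSumRep_subset : cardSumRep Y m σ ⊆ Y := by
  unfold cardSumRep
  split_ifs with h
  · exact h.choose_spec.1
  · exact empty_subset Y

lemma card_cardSumRep_le : #(cardSumRep Y m σ) ≤ m := by
  unfold cardSumRep
  split_ifs with h
  · exact h.choose_spec.2.1.le
  · simp

lemma card_cardSumRep_eq_and_sum_eq {T : Finset ℕ} (hT : T ⊆ Y) :
    #(cardSumRep Y #T (SUM T)) = #T ∧ SUM (cardSumRep Y #T (SUM T)) = SUM T := by
  have h : ∃ T' ⊆ Y, #T' = #T ∧ SUM T' = SUM T := ⟨T, hT, rfl, rfl⟩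
  rw [cardSumRep, dif_pos h]
  exact h.choose_spec.2

end CardSumRep

def dyadic (t j : ℕ) : Finset ℕ := Ioc (j * 2 ^ t) ((j + 1) * 2 ^ t)

lemma card_dyadic (t j : ℕ) : #(dyadic t j) = 2 ^ t := by
  rw [dyadic, Nat.card_Ioc, add_mul, one_mul, Nat.add_sub_cancel_left]

lemma dyadic_succ (t j : ℕ) : dyadic (t + 1) j = dyadic t (2 * j) ∪ dyadic t (2 * j + 1) := by
  have h₁ : 2 * j * 2 ^ t ≤ (2 * j + 1) * 2 ^ t := Nat.mul_le_mul_right _ (by omega)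
  have h₂ : (2 * j + 1) * 2 ^ t ≤ (2 * j + 1 + 1) * 2 ^ t := Nat.mul_le_mul_right _ (by omega)
  rw [dyadic, dyadic, dyadic, Ioc_union_Ioc_eq_Ioc h₁ h₂]
  congr 1 <;> ring

lemma disjoint_dyadic_two_mul (t j : ℕ) : Disjoint (dyadic t (2 * j)) (dyadic t (2 * j + 1)) :=
  Ioc_disjoint_Ioc_of_le le_rfl

noncomputable def dyadicRepFamily (X : Finset ℕ) (b L : ℕ) : Finset (Finset ℕ) :=
  (range (L + 1)).biUnion fun t => (range (2 ^ (L - t))).biUnion fun j =>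
    (Icc 1 b).biUnion fun m => (Ioc (m * (j * 2 ^ t)) (m * ((j + 1) * 2 ^ t))).image fun σ =>
      cardSumRep (X ∩ dyadic t j) m σ

variable {X : Finset ℕ} {b L : ℕ}

lemma subset_and_card_le_of_mem_dyadicRepFamily {A : Finset ℕ} (hA : A ∈ dyadicRepFamily X b L) :
    A ⊆ X ∧ #A ≤ b := by
  simp only [dyadicRepFamily, mem_biUnion, mem_image, mem_range, mem_Icc] at hA
  obtain ⟨t, -, j, -, m, ⟨-, hmb⟩, σ, -, rfl⟩ := hA
  exact ⟨cardSumRep_subset.trans inter_subset_left, card_cardSumRep_le.trans hmb⟩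

lemma card_dyadicRepFamily_le : #(dyadicRepFamily X b L) ≤ (L + 1) * (b * b * 2 ^ L) := by
  refine card_range (L + 1) ▸ card_biUnion_le_card_mul _ _ _ fun t ht => ?_
  have hL : 2 ^ (L - t) * 2 ^ t = 2 ^ L := by
    rw [← pow_add, Nat.sub_add_cancel (Nat.lt_succ_iff.mp (mem_range.mp ht))]
  calc _ ≤ #(range (2 ^ (L - t))) * (b * (b * 2 ^ t)) :=
        card_biUnion_le_card_mul _ _ _ fun j _ => ?_
    _ = b * b * 2 ^ L := by rw [card_range, ← hL]; ring
  calc _ ≤ #(Icc 1 b) * (b * 2 ^ t) := card_biUnion_le_card_mul _ _ _ fun m hm => ?_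
    _ = b * (b * 2 ^ t) := by rw [Nat.card_Icc, Nat.add_sub_cancel]
  calc _ ≤ #(Ioc (m * (j * 2 ^ t)) (m * ((j + 1) * 2 ^ t))) := card_image_le
    _ = m * 2 ^ t := by rw [Nat.card_Ioc, add_mul, one_mul, mul_add, Nat.add_sub_cancel_left]
    _ ≤ b * 2 ^ t := Nat.mul_le_mul_right _ (mem_Icc.mp hm).2

lemma cardSumRep_mem_dyadicRepFamily {t j : ℕ} (ht : t ≤ L) (hj : j < 2 ^ (L - t))
    {S : Finset ℕ} (hS : S ⊆ dyadic t j) (hne : S.Nonempty) (hSb : #S ≤ b) :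
    cardSumRep (X ∩ dyadic t j) #S (SUM S) ∈ dyadicRepFamily X b L := by
  simp only [dyadicRepFamily, mem_biUnion, mem_image, mem_range, mem_Icc]
  exact ⟨t, Nat.lt_succ_of_le ht, j, hj, #S, ⟨card_pos.mpr hne, hSb⟩, SUM S,
    sum_mem_Ioc_of_subset_Ioc hS hne, rfl⟩

section Replacement

structure IsReplacement (𝒮 : Finset (Finset ℕ)) (D S : Finset ℕ) (𝒯 : Finset (Finset ℕ)) :
    Prop where
  subset : 𝒯 ⊆ 𝒮
  pairwiseDisjoint : (𝒯 : Set (Finset ℕ)).PairwiseDisjoint id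
  subset_of_mem : ∀ A ∈ 𝒯, A ⊆ D
  card_biUnion : #(𝒯.biUnion id) = #S
  sum_biUnion : SUM (𝒯.biUnion id) = SUM S

variable {𝒮 : Finset (Finset ℕ)}

lemma isReplacement_empty (D : Finset ℕ) : IsReplacement 𝒮 D ∅ ∅ :=
  ⟨empty_subset _, by simp, by simp, rfl, rfl⟩

lemma isReplacement_singleton {D S A : Finset ℕ} (hA : A ∈ 𝒮) (hAD : A ⊆ D) (hcard : #A = #S)
    (hsum : SUM A = SUM S) : IsReplacement 𝒮 D S {A} :=
  ⟨singleton_subset_iff.mpr hA, by simp, by simpa using hAD, by simpa using hcard,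
    by simpa using hsum⟩

lemma IsReplacement.union {D₁ D₂ S₁ S₂ : Finset ℕ} {𝒯₁ 𝒯₂ : Finset (Finset ℕ)}
    (h₁ : IsReplacement 𝒮 D₁ S₁ 𝒯₁) (h₂ : IsReplacement 𝒮 D₂ S₂ 𝒯₂) (hD : Disjoint D₁ D₂)
    (hS : Disjoint S₁ S₂) : IsReplacement 𝒮 (D₁ ∪ D₂) (S₁ ∪ S₂) (𝒯₁ ∪ 𝒯₂) := by
  have hU : Disjoint (𝒯₁.biUnion id) (𝒯₂.biUnion id) :=
    hD.mono (biUnion_subset.mpr h₁.subset_of_mem) (biUnion_subset.mpr h₂.subset_of_mem)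
  refine ⟨union_subset h₁.subset h₂.subset, ?_, ?_, ?_, ?_⟩
  · rw [coe_union, Set.pairwiseDisjoint_union]
    exact ⟨h₁.pairwiseDisjoint, h₂.pairwiseDisjoint, fun A hA B hB _ =>
      hD.mono (h₁.subset_of_mem A hA) (h₂.subset_of_mem B hB)⟩
  · intro A hA
    rcases mem_union.mp hA with hA | hA
    · exact (h₁.subset_of_mem A hA).trans subset_union_left
    · exact (h₂.subset_of_mem A hA).trans subset_union_right
  · rw [union_biUnion, card_union_of_disjoint hU, card_union_of_disjoint hS, h₁.card_biUnion,
      h₂.card_biUnion]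
  · unfold SUM
    rw [union_biUnion, sum_union hU, sum_union hS]
    exact congr_arg₂ _ h₁.sum_biUnion h₂.sum_biUnion

end Replacement

lemma exists_isReplacement_of_card_le {t j : ℕ} (ht : t ≤ L) (hj : j < 2 ^ (L - t))
    {S : Finset ℕ} (hSX : S ⊆ X) (hS : S ⊆ dyadic t j) (hSb : #S ≤ b) :
    ∃ 𝒯, IsReplacement (dyadicRepFamily X b L) (dyadic t j) S 𝒯 ∧
      #𝒯 * (b + 1) ≤ (b + 1) + t * #S := by
  rcases S.eq_empty_or_nonempty with rfl | hne
  · exact ⟨∅, isReplacement_empty _, by simp⟩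
  obtain ⟨hcard, hsum⟩ := card_cardSumRep_eq_and_sum_eq (subset_inter hSX hS)
  exact ⟨_, isReplacement_singleton (cardSumRep_mem_dyadicRepFamily ht hj hS hne hSb)
    (cardSumRep_subset.trans inter_subset_right) hcard hsum, by simp⟩

lemma exists_isReplacement (hb : 1 ≤ b) (t : ℕ) {j : ℕ} (ht : t ≤ L) (hj : j < 2 ^ (L - t))
    {S : Finset ℕ} (hSX : S ⊆ X) (hS : S ⊆ dyadic t j) :
    ∃ 𝒯, IsReplacement (dyadicRepFamily X b L) (dyadic t j) S 𝒯 ∧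
      #𝒯 * (b + 1) ≤ (b + 1) + t * #S := by
  induction t generalizing j S with
  | zero =>
    exact exists_isReplacement_of_card_le ht hj hSX hS
      (((card_le_card hS).trans_eq (card_dyadic 0 j)).trans hb)
  | succ s ih =>
    by_cases hSb : #S ≤ b
    · exact exists_isReplacement_of_card_le ht hj hSX hS hSb
    have hj' : 2 * j + 1 < 2 ^ (L - s) := by
      rw [show L - s = L - (s + 1) + 1 by omega, pow_succ]
      omega
    obtain ⟨𝒯₁, h₁, hc₁⟩ := ih (j := 2 * j) (by omega) (by omega) (inter_subset_left.trans hSX)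
      (inter_subset_right (s₁ := S))
    obtain ⟨𝒯₂, h₂, hc₂⟩ := ih (j := 2 * j + 1) (by omega) hj' (inter_subset_left.trans hSX)
      (inter_subset_right (s₁ := S))
    set S₁ := S ∩ dyadic s (2 * j)
    set S₂ := S ∩ dyadic s (2 * j + 1)
    have hS₁₂ : S₁ ∪ S₂ = S := by
      rw [← inter_union_distrib_left, ← dyadic_succ, inter_eq_left.mpr hS]
    have hdisj : Disjoint S₁ S₂ :=
      (disjoint_dyadic_two_mul s j).mono inter_subset_right inter_subset_right
    have hcard : #S₁ + #S₂ = #S := by rw [← card_union_of_disjoint hdisj, hS₁₂]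
    refine ⟨𝒯₁ ∪ 𝒯₂, ?_, ?_⟩
    · rw [dyadic_succ, ← hS₁₂]
      exact h₁.union h₂ (disjoint_dyadic_two_mul s j) hdisj
    · have hsplit : s * #S₁ + s * #S₂ = s * #S := by rw [← mul_add, hcard]
      calc #(𝒯₁ ∪ 𝒯₂) * (b + 1) ≤ (#𝒯₁ + #𝒯₂) * (b + 1) :=
            Nat.mul_le_mul_right _ (card_union_le _ _)
        -- the second `b + 1` is paid for by `b < #S`
        _ ≤ (b + 1) + (s + 1) * #S := by rw [add_mul, add_mul]; omega

lemma cast_le_of_mul_succ_le {n s b L : ℕ} (hb : 1 ≤ b) (h : n * (b + 1) ≤ (b + 1) + L * s) :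
    (n : ℝ) ≤ 2 * ((s : ℝ) / b + 1) * (L + 1) := by
  have hb₀ : (0 : ℝ) < b := by exact_mod_cast hb
  have h' : (n : ℝ) * (b + 1) ≤ (b + 1) + L * s := by exact_mod_cast h
  rw [div_add_one hb₀.ne', mul_div_assoc', div_mul_eq_mul_div, le_div_iff₀ hb₀]
  have hL : (0 : ℝ) ≤ L := Nat.cast_nonneg L
  have hs : (0 : ℝ) ≤ s := Nat.cast_nonneg s
  nlinarith [mul_nonneg hL hs, mul_nonneg hL hb₀.le, (Nat.cast_nonneg n : (0 : ℝ) ≤ n)]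

theorem stmt_5 (u : ℕ) (hu : ∃ j : ℕ, u = 2 ^ j) (b : ℕ) (hb : 1 ≤ b)
    (X : Finset ℕ) (hX : ∀ x ∈ X, x ∈ Finset.Ioc 0 u) :
    ∃ 𝒮 : Finset (Finset ℕ),
      (∀ A ∈ 𝒮, A ⊆ X ∧ A.card ≤ b) ∧
      (𝒮.card : ℝ) ≤ 2 * ((b : ℝ) + 1) ^ 2 * (u : ℝ) * (Real.logb 2 (u : ℝ) + 1) ∧
      ∀ S ⊆ X, ∃ Shat ⊆ X, Shat.card = S.card ∧ SUM Shat = SUM S ∧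
        ∃ 𝒯 ⊆ 𝒮, (𝒯 : Set (Finset ℕ)).PairwiseDisjoint id ∧
          (𝒯.card : ℝ) ≤ 2 * ((S.card : ℝ) / (b : ℝ) + 1) * (Real.logb 2 (u : ℝ) + 1) ∧
          Shat = 𝒯.biUnion id := by
  obtain ⟨L, rfl⟩ := hu
  have hlog : Real.logb 2 ((2 ^ L : ℕ) : ℝ) = L := by
    rw [Nat.cast_pow, Nat.cast_ofNat, Real.logb_pow, Real.logb_self_eq_one one_lt_two, mul_one]
  rw [hlog]
  refine ⟨dyadicRepFamily X b L, fun A hA => subset_and_card_le_of_mem_dyadicRepFamily hA,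
    ?_, fun S hSX => ?_⟩
  · have hcard : (#(dyadicRepFamily X b L) : ℝ) ≤ (L + 1) * (b * b * 2 ^ L) := by
      exact_mod_cast card_dyadicRepFamily_le
    have hb2 : (b : ℝ) * b ≤ 2 * ((b : ℝ) + 1) ^ 2 := by nlinarith
    push_cast
    nlinarith [mul_le_mul_of_nonneg_right hb2 (by positivity : (0 : ℝ) ≤ (L + 1) * 2 ^ L)]
  · have hS : S ⊆ dyadic L 0 := fun x hx => by simpa [dyadic] using hX x (hSX hx)
    obtain ⟨𝒯, h𝒯, hcard⟩ := exists_isReplacement hb L le_rfl (by simp) hSX hS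
    exact ⟨𝒯.biUnion id, biUnion_subset.mpr fun A hA =>
        (subset_and_card_le_of_mem_dyadicRepFamily (h𝒯.subset hA)).1,
      h𝒯.card_biUnion, h𝒯.sum_biUnion, 𝒯, h𝒯.subset, h𝒯.pairwiseDisjoint,
      cast_le_of_mul_succ_le hb hcard, rfl⟩
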